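/- arXiv:2306.09655 — 5 statements merged into one kernel-verified Lean document; each statement's English description precedes it below -/
import Mathlib

section
/- Let D be a digraph of order n ≥ 3 containing a directed cycle C of length m, where 2 ≤ m ≤ n−1, and let x be a vertex not on C. If d(x, V(C)) ≥ m+1, then for every k with 2 ≤ k ≤ m+1, D contains a directed cycle of length k passing through x. -/
/-! A digraph on a vertex type `V` is given by its arc relation `A : V → V → Prop`
(this automatically forbids multiple arcs); looplessness is expressed by the
hypothesis `Irreflexive A`. -/

/-- The degree of `x`: its out-degree plus its in-degree. -/
noncomputable def degree {V : Type*} (A : V → V → Prop) (x : V) : ℕ :=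
  {y | A x y}.ncard + {y | A y x}.ncard

/-- `degreeIn A x S` is the number of arcs between `x` and vertices of `S`,
in both directions. -/
noncomputable def degreeIn {V : Type*} (A : V → V → Prop) (x : V) (S : Set V) : ℕ :=
  {y ∈ S | A x y}.ncard + {y ∈ S | A y x}.ncard

/-- `c : Fin m → V` is a directed cycle of length `m` (indices taken mod `m`). -/
def IsCycle {V : Type*} (A : V → V → Prop) {m : ℕ} (c : Fin m → V) : Prop :=
  2 ≤ m ∧ Function.Injective c ∧
    ∀ i : Fin m, A (c i) (c ⟨(i.val + 1) % m, Nat.mod_lt _ i.pos⟩)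

/-- `p : Fin m → V` is a directed path on `m` vertices (of length `m - 1`). -/
def IsPath {V : Type*} (A : V → V → Prop) {m : ℕ} (p : Fin m → V) : Prop :=
  Function.Injective p ∧ ∀ (i : Fin m) (h : i.val + 1 < m), A (p i) (p ⟨i.val + 1, h⟩)

/-- A digraph is Hamiltonian if it has a directed cycle through all of its vertices. -/
def IsHamiltonian {V : Type*} [Fintype V] (A : V → V → Prop) : Prop :=
  ∃ c : Fin (Fintype.card V) → V, IsCycle A c ∧ Function.Surjective c

/-- Reachability by a directed path staying inside the set `S`. -/
def ReachIn {V : Type*} (A : V → V → Prop) (S : Set V) : V → V → Prop :=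
  Relation.ReflTransGen (fun u v => u ∈ S ∧ v ∈ S ∧ A u v)

/-- A digraph is strong if every vertex is reachable from every other by a directed path. -/
def IsStrong {V : Type*} (A : V → V → Prop) : Prop :=
  ∀ x y : V, Relation.ReflTransGen A x y

/-- A digraph is `k`-strong if it has at least `k + 1` vertices and the deletion of
any set of at most `k - 1` vertices leaves a strong digraph. -/
def IsKStrong {V : Type*} [Fintype V] (A : V → V → Prop) (k : ℕ) : Prop :=
  k + 1 ≤ Fintype.card V ∧
    ∀ S : Set V, S.ncard ≤ k - 1 → ∀ x ∈ Sᶜ, ∀ y ∈ Sᶜ, ReachIn A Sᶜ x y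

/-- Häggkvist–Thomassen: let `D` be a digraph of order `n ≥ 3` containing a directed
cycle `c` of length `m`, `2 ≤ m ≤ n - 1`, and let `x` be a vertex not on the cycle.
If `d(x, V(c)) ≥ m + 1`, then for every `k` with `2 ≤ k ≤ m + 1`, `D` contains a
directed cycle of length `k` through `x`. -/
theorem statement7 {V : Type*} [Fintype V] [DecidableEq V] (A : V → V → Prop)
    (hirr : Irreflexive A)
    (n : ℕ) (hn3 : 3 ≤ n) (hcard : Fintype.card V = n)
    (m : ℕ) (hm2 : 2 ≤ m) (hmn : m ≤ n - 1)
    (c : Fin m → V) (hc : IsCycle A c)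
    (x : V) (hx : x ∉ Set.range c)
    (hdx : m + 1 ≤ degreeIn A x (Set.range c)) :
    ∀ k : ℕ, 2 ≤ k → k ≤ m + 1 →
      ∃ c' : Fin k → V, IsCycle A c' ∧ x ∈ Set.range c' := by
  classical
  intro k hk2 hkm
  haveI : NeZero m := ⟨by omega⟩
  have hinj := hc.2.1
  set d : Fin m := ⟨k - 2, by omega⟩ with hd
  have key : ∃ j : Fin m, A x (c j) ∧ A (c (j + d)) x := by
    by_contra hcon
    push_neg at hcon
    have hdisj : Disjoint {i : Fin m | A x (c i)} {i : Fin m | A (c (i + d)) x} := by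
      rw [Set.disjoint_left]
      intro i h1 h2
      exact hcon i h1 h2
    have e1 : {y ∈ Set.range c | A x y}.ncard = {i : Fin m | A x (c i)}.ncard := by
      have h1 : {y ∈ Set.range c | A x y} = c '' {i | A x (c i)} := by
        ext y
        constructor
        · rintro ⟨⟨i, rfl⟩, hy⟩; exact ⟨i, hy, rfl⟩
        · rintro ⟨i, hi, rfl⟩; exact ⟨⟨i, rfl⟩, hi⟩
      rw [h1, Set.ncard_image_of_injective _ hinj]
    have e2 : {y ∈ Set.range c | A y x}.ncard = {i : Fin m | A (c (i + d)) x}.ncard := by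
      have h1 : {y ∈ Set.range c | A y x} = c '' {i | A (c i) x} := by
        ext y
        constructor
        · rintro ⟨⟨i, rfl⟩, hy⟩; exact ⟨i, hy, rfl⟩
        · rintro ⟨i, hi, rfl⟩; exact ⟨⟨i, rfl⟩, hi⟩
      have h2 : {i : Fin m | A (c (i + d)) x} = (fun i => i - d) '' {i : Fin m | A (c i) x} := by
        ext i
        simp only [Set.mem_image, Set.mem_setOf_eq]
        constructor
        · intro hi; exact ⟨i + d, hi, add_sub_cancel_right i d⟩
        · rintro ⟨p, hp, rfl⟩
          simpa [sub_add_cancel] using hp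
      have hsubinj : Function.Injective (fun i : Fin m => i - d) := by
        intro a b hab
        have := congrArg (· + d) hab
        simpa using this
      rw [h1, Set.ncard_image_of_injective _ hinj, h2, Set.ncard_image_of_injective _ hsubinj]
    have hle : {i : Fin m | A x (c i)}.ncard + {i : Fin m | A (c (i + d)) x}.ncard ≤ m := by
      rw [← Set.ncard_union_eq hdisj (Set.toFinite _) (Set.toFinite _)]
      calc ({i : Fin m | A x (c i)} ∪ {i : Fin m | A (c (i + d)) x}).ncard
          ≤ (Set.univ : Set (Fin m)).ncard :=
            Set.ncard_le_ncard (Set.subset_univ _) (Set.toFinite _)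
        _ = m := by simp [Set.ncard_univ]
    unfold degreeIn at hdx
    rw [e1, e2] at hdx
    omega
  obtain ⟨j, hj1, hj2⟩ := key
  set c' : Fin k → V := fun t =>
    if t.val = 0 then x else c (j + ⟨t.val - 1, by have := t.2; omega⟩) with hc'
  have hc'0 : ∀ t : Fin k, t.val = 0 → c' t = x := fun t ht => if_pos ht
  have hc's : ∀ t : Fin k, t.val ≠ 0 →
      c' t = c (j + ⟨t.val - 1, by have := t.2; omega⟩) := fun t ht => if_neg ht
  refine ⟨c', ⟨hk2, ?_, ?_⟩, ⟨⟨0, by omega⟩, hc'0 _ rfl⟩⟩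
  · intro s t hst
    by_cases hs : s.val = 0 <;> by_cases ht : t.val = 0
    · exact Fin.ext (by omega)
    · rw [hc'0 s hs, hc's t ht] at hst
      exact absurd ⟨_, hst.symm⟩ hx
    · rw [hc's s hs, hc'0 t ht] at hst
      exact absurd ⟨_, hst⟩ hx
    · rw [hc's s hs, hc's t ht] at hst
      have h2 := add_left_cancel (hinj hst)
      have h3 : s.val - 1 = t.val - 1 := congrArg Fin.val h2
      exact Fin.ext (by omega)
  · intro i
    by_cases hi0 : i.val = 0
    · have hsv : (i.val + 1) % k = 1 := by rw [hi0]; exact Nat.mod_eq_of_lt (by omega)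
      rw [hc'0 i hi0, hc's ⟨(i.val + 1) % k, Nat.mod_lt _ i.pos⟩ (by simp [hsv])]
      convert hj1 using 3
      apply Fin.ext
      rw [Fin.add_def]
      simp [hsv]
      exact Nat.mod_eq_of_lt j.2
    · by_cases hik : i.val = k - 1
      · have hsv : (i.val + 1) % k = 0 := by
          rw [hik]
          have : k - 1 + 1 = k := by omega
          rw [this, Nat.mod_self]
        rw [hc's i hi0, hc'0 ⟨(i.val + 1) % k, Nat.mod_lt _ i.pos⟩ hsv]
        convert hj2 using 4
        omega
      · have hlt : i.val + 1 < k := by have := i.2; omega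
        have hsv : (i.val + 1) % k = i.val + 1 := Nat.mod_eq_of_lt hlt
        rw [hc's i hi0, hc's ⟨(i.val + 1) % k, Nat.mod_lt _ i.pos⟩ (by simp [hsv])]
        have harc := hc.2.2 (j + ⟨i.val - 1, by have := i.2; omega⟩)
        convert harc using 3
        rw [Fin.add_def, Fin.add_def]
        simp only [Fin.val_mk, hsv]
        have h1 : ((j.val + (i.val - 1)) % m + 1) % m = (j.val + (i.val - 1) + 1) % m :=
          Nat.mod_add_mod _ _ _
        rw [h1]
        congr 1
        omega
end

section
/- Let D be a digraph of order n ≥ 3 containing a directed path P = x_1 x_2 … x_m, where 2 ≤ m ≤ n−1, and let x be a vertex not on P. Suppose one of the following conditions holds: (i) d(x, V(P)) ≥ m+2; (ii) d(x, V(P)) ≥ m+1 and (x x_1 is not an arc of D or x_m x is not an arc of D); (iii) d(x, V(P)) ≥ m and x x_1 is not an arc of D and x_m x is not an arc of D. Then there is an index i with 1 ≤ i ≤ m−1 such that x_i x and x x_{i+1} are both arcs of D, i.e., D contains the path x_1 x_2 … x_i x x_{i+1} … x_m of length m. -/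
/-- Insertion lemma: let `D` be a digraph of order `n ≥ 3` containing a directed path
`p = x₁ x₂ … x_m`, `2 ≤ m ≤ n - 1`, and let `x` be a vertex not on `p`.  If
(i) `d(x, V(p)) ≥ m + 2`, or
(ii) `d(x, V(p)) ≥ m + 1` and (`x x₁ ∉ A(D)` or `x_m x ∉ A(D)`), or
(iii) `d(x, V(p)) ≥ m` and `x x₁ ∉ A(D)` and `x_m x ∉ A(D)`,
then there is an `i` with `x_i → x → x_{i+1}`, i.e. `x` can be inserted into `p`. -/
theorem statement8 {V : Type*} [Fintype V] [DecidableEq V] (A : V → V → Prop)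
    (hirr : Irreflexive A)
    (n : ℕ) (hn3 : 3 ≤ n) (hcard : Fintype.card V = n)
    (m : ℕ) (hm2 : 2 ≤ m) (hmn : m ≤ n - 1)
    (p : Fin m → V) (hp : IsPath A p)
    (x : V) (hx : x ∉ Set.range p)
    (hcond :
      m + 2 ≤ degreeIn A x (Set.range p) ∨
      (m + 1 ≤ degreeIn A x (Set.range p) ∧
        (¬ A x (p ⟨0, by omega⟩) ∨ ¬ A (p ⟨m - 1, by omega⟩) x)) ∨
      (m ≤ degreeIn A x (Set.range p) ∧
        ¬ A x (p ⟨0, by omega⟩) ∧ ¬ A (p ⟨m - 1, by omega⟩) x)) :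
    ∃ (i : Fin m) (h : i.val + 1 < m), A (p i) x ∧ A x (p ⟨i.val + 1, h⟩) := by
  classical
  by_contra hcon
  push_neg at hcon
  set O : Finset (Fin m) := Finset.univ.filter (fun i => A x (p i)) with hOdef
  set I : Finset (Fin m) := Finset.univ.filter (fun i => A (p i) x) with hIdef
  have hmem_O : ∀ i, i ∈ O ↔ A x (p i) := by intro i; simp [hOdef]
  have hmem_I : ∀ i, i ∈ I ↔ A (p i) x := by intro i; simp [hIdef]
  have hdeg : degreeIn A x (Set.range p) = O.card + I.card := by
    have h1 : {y ∈ Set.range p | A x y} = p '' {i | A x (p i)} := by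
      ext y
      constructor
      · rintro ⟨⟨i, rfl⟩, hy⟩; exact ⟨i, hy, rfl⟩
      · rintro ⟨i, hi, rfl⟩; exact ⟨⟨i, rfl⟩, hi⟩
    have h2 : {y ∈ Set.range p | A y x} = p '' {i | A (p i) x} := by
      ext y
      constructor
      · rintro ⟨⟨i, rfl⟩, hy⟩; exact ⟨i, hy, rfl⟩
      · rintro ⟨i, hi, rfl⟩; exact ⟨⟨i, rfl⟩, hi⟩
    have e1 : {i | A x (p i)} = (O : Set (Fin m)) := by ext i; simp [hOdef]
    have e2 : {i | A (p i) x} = (I : Set (Fin m)) := by ext i; simp [hIdef]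
    rw [degreeIn, h1, h2, Set.ncard_image_of_injective _ hp.1,
      Set.ncard_image_of_injective _ hp.1, e1, e2,
      Set.ncard_coe_finset, Set.ncard_coe_finset]
  have hm0 : 0 < m := by omega
  set z : Fin m := ⟨0, hm0⟩ with hz
  set l : Fin m := ⟨m - 1, by omega⟩ with hl
  set g : Fin m → Fin m := fun i => ⟨(i.val + 1) % m, Nat.mod_lt _ hm0⟩ with hg
  have hgval : ∀ i : Fin m, i ≠ l → (g i).val = i.val + 1 := by
    intro i hi
    have h1 : i.val ≠ m - 1 := fun h => hi (Fin.ext h)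
    have h2 : i.val + 1 < m := by have := i.isLt; omega
    simp [hg, Nat.mod_eq_of_lt h2]
  have key : (I.erase l).card + (O.erase z).card ≤ m - 1 := by
    have hinj : Set.InjOn g (I.erase l) := by
      intro a ha hb hbm hab
      have ha' := hgval a (Finset.ne_of_mem_erase ha)
      have hb' := hgval hb (Finset.ne_of_mem_erase hbm)
      have := congrArg Fin.val hab
      apply Fin.ext
      omega
    have hdisj : Disjoint ((I.erase l).image g) (O.erase z) := by
      rw [Finset.disjoint_left]
      rintro j hj hjO
      obtain ⟨i, hi, rfl⟩ := Finset.mem_image.mp hj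
      have hne := Finset.ne_of_mem_erase hi
      have hv := hgval i hne
      have hlt : i.val + 1 < m := by have := (g i).isLt; omega
      have hiI : A (p i) x := (hmem_I i).1 (Finset.mem_of_mem_erase hi)
      have hgi : g i = ⟨i.val + 1, hlt⟩ := Fin.ext hv
      rw [hgi] at hjO
      exact hcon i hlt hiI ((hmem_O _).1 (Finset.mem_of_mem_erase hjO))
    have hsub : (I.erase l).image g ∪ O.erase z ⊆ Finset.univ.erase z := by
      intro j hj
      rcases Finset.mem_union.mp hj with hj | hj
      · obtain ⟨i, hi, rfl⟩ := Finset.mem_image.mp hj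
        refine Finset.mem_erase.mpr ⟨?_, Finset.mem_univ _⟩
        intro h
        have hv := hgval i (Finset.ne_of_mem_erase hi)
        rw [h] at hv
        simp [hz] at hv
      · exact Finset.mem_erase.mpr ⟨Finset.ne_of_mem_erase hj, Finset.mem_univ _⟩
    have h1 := Finset.card_le_card hsub
    rw [Finset.card_union_of_disjoint hdisj, Finset.card_image_of_injOn hinj] at h1
    have h2 : (Finset.univ.erase z).card = m - 1 := by
      rw [Finset.card_erase_of_mem (Finset.mem_univ _)]
      simp
    omega
  have hOle : O.card ≤ (O.erase z).card + 1 := by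
    by_cases h : z ∈ O
    · rw [Finset.card_erase_of_mem h]
      have := Finset.card_pos.mpr ⟨z, h⟩
      omega
    · rw [Finset.erase_eq_of_notMem h]; omega
  have hIle : I.card ≤ (I.erase l).card + 1 := by
    by_cases h : l ∈ I
    · rw [Finset.card_erase_of_mem h]
      have := Finset.card_pos.mpr ⟨l, h⟩
      omega
    · rw [Finset.erase_eq_of_notMem h]; omega
  rcases hcond with h | ⟨h, hc⟩ | ⟨h, hc1, hc2⟩
  · rw [hdeg] at h
    omega
  · rw [hdeg] at h
    rcases hc with hc | hc
    · have hzO : z ∉ O := fun hzz => hc ((hmem_O z).1 hzz)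
      rw [Finset.erase_eq_of_notMem hzO] at key
      omega
    · have hlI : l ∉ I := fun hll => hc ((hmem_I l).1 hll)
      rw [Finset.erase_eq_of_notMem hlI] at key
      omega
  · rw [hdeg] at h
    have hzO : z ∉ O := fun hzz => hc1 ((hmem_O z).1 hzz)
    have hlI : l ∉ I := fun hll => hc2 ((hmem_I l).1 hll)
    rw [Finset.erase_eq_of_notMem hzO, Finset.erase_eq_of_notMem hlI] at key
    omega
end

section
/- Let D be a non-Hamiltonian 2-strong digraph of order n such that n−1 of its vertices have degree at least n+1 and the remaining vertex z has degree at most n−2. Suppose C = x_1 x_2 … x_m z x_1, with 2 ≤ m ≤ n−3, is a longest directed cycle through z in D, and Y = V(D) \ V(C) contains two distinct vertices y_1, y_2 that are mutually reachable in D⟨Y⟩ and satisfy d(y_i, {x_1, …, x_m}) = m+1 for each i ∈ {1,2}. Then there exists an integer l with 2 ≤ l ≤ m−1 such that every vertex of {x_l, x_{l+1}, …, x_m} dominates both y_1 and y_2, and both y_1 and y_2 dominate every vertex of {x_1, x_2, …, x_l}. -/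
/-! Write the longest cycle through `z` as `C = z x₀ … x_{m-1} z` and let `Y` be the set of the
remaining vertices. Replacing the stretch of `C` strictly between two vertices at distance `d`
along `C` by a path of `k` vertices of `Y` gives a cycle through `z` of length `m + 2 + k - d`, so
such a path exists only if `k < d`. For `y = y₁, y₂` the `m + 1` arcs between `y` and the `x_j`
must therefore fill exactly the `m + 1` slots `y → x₀`, `x_{m-1} → y` and, for each `j`, one of
`x_j → y`, `y → x_{j+1}`. The `Y`-paths between `y₁` and `y₂` show that `y₁` and `y₂` have the
same pattern, and that once `y₁` stops dominating the `x_j` it never dominates a later one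
(`x_{j-1} → y₁ ⇝ y₂ → x_{j+1}` is excluded), so the pattern is a threshold. If `y₁` dominated
every `x_j`, a path from `z` to `y₁` avoiding `x_{m-1}`, which exists as `D` is 2-strong, would
enter `Y` right after a cycle vertex whose successor `y₁` dominates; symmetrically, not every
`x_j` dominates `y₂`. This excludes the two extreme thresholds. -/

namespace ReachIn

variable {V : Type*} {A : V → V → Prop} {S T : Set V} {u v : V}

theorem exists_nodup_isChain (h : ReachIn A S u v) :
    ∃ l : List V, (u :: l).IsChain A ∧ (u :: l).Nodup ∧ (∀ w ∈ l, w ∈ S) ∧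
      (u :: l).getLast (List.cons_ne_nil _ _) = v := by
  induction h using Relation.ReflTransGen.head_induction_on with
  | refl => exact ⟨[], .singleton _, List.nodup_singleton _, by simp, rfl⟩
  | @head a b hab _ ih =>
    obtain ⟨-, hbS, hab⟩ := hab
    obtain ⟨l, hch, hnd, hS, hlast⟩ := ih
    have hS' : ∀ w ∈ b :: l, w ∈ S := by simpa [hbS] using hS
    by_cases ha : a ∈ b :: l
    · obtain ⟨l₁, l₂, hsplit⟩ := List.append_of_mem ha
      refine ⟨l₂, ?_, ?_, fun w hw => hS' w (by simp [hsplit, hw]), ?_⟩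
      · exact hch.suffix (hsplit ▸ List.suffix_append _ _)
      · exact hnd.sublist (hsplit ▸ List.sublist_append_right _ _)
      · rw [← hlast]; simp [hsplit]
    · exact ⟨b :: l, hch.cons (by simpa using hab), List.nodup_cons.2 ⟨ha, hnd⟩, hS', by simpa⟩

theorem exists_entry (h : ReachIn A S u v) (hu : u ∉ T) (hv : v ∈ T) :
    ∃ w q, w ∈ S ∧ w ∉ T ∧ A w q ∧ q ∈ T ∧ ReachIn A T q v := by
  induction h with
  | refl => exact absurd hv hu
  | @tail b c _ hbc ih =>
    obtain ⟨hbS, -, hA⟩ := hbc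
    by_cases hb : b ∈ T
    · obtain ⟨w, q, hwS, hwT, hwq, hqT, hq⟩ := ih hb
      exact ⟨w, q, hwS, hwT, hwq, hqT, hq.tail ⟨hb, hv, hA⟩⟩
    · exact ⟨b, c, hbS, hb, hA, hv, .refl⟩

theorem exists_exit (h : ReachIn A S u v) (hu : u ∈ T) (hv : v ∉ T) :
    ∃ q w, ReachIn A T u q ∧ q ∈ T ∧ A q w ∧ w ∈ S ∧ w ∉ T := by
  induction h using Relation.ReflTransGen.head_induction_on with
  | refl => exact absurd hu hv
  | @head a b hab _ ih =>
    obtain ⟨-, hbS, hA⟩ := hab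
    by_cases hb : b ∈ T
    · obtain ⟨q, w, hq, hqT, hqw, hwS, hwT⟩ := ih hb
      exact ⟨q, w, hq.head ⟨hu, hb, hA⟩, hqT, hqw, hwS, hwT⟩
    · exact ⟨a, b, .refl, hu, hA, hbS, hb⟩

end ReachIn

theorem List.getElem_append_singleton_eq_getD {α : Type*} {l : List α} {a : α} {i : ℕ}
    (h : i < (l ++ [a]).length) : (l ++ [a])[i] = l.getD i a := by
  rcases (Nat.lt_succ_iff.mp (by simpa using h)).lt_or_eq with h' | rfl
  · simp [List.getElem_append_left h', h']
  · simp

open Finset in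
theorem ncard_sep_mem_eq_card {V : Type*} {X : List V} (hX : X.Nodup) (p : V → Prop)
    [DecidablePred p] (d : V) :
    {v ∈ {v | v ∈ X} | p v}.ncard = #{j ∈ range X.length | p (X.getD j d)} := by
  classical
  have himage : {v ∈ {v | v ∈ X} | p v} =
      ↑({j ∈ range X.length | p (X.getD j d)}.image (X.getD · d)) := by
    ext v
    simp only [Set.mem_ofPred_eq, coe_image, Set.mem_image, mem_coe, mem_filter, mem_range,
      List.mem_iff_getElem]
    constructor
    · rintro ⟨⟨j, hj, rfl⟩, hp⟩
      exact ⟨j, ⟨hj, by simpa [hj] using hp⟩, by simp [hj]⟩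
    · rintro ⟨j, ⟨hj, hp⟩, rfl⟩
      exact ⟨⟨j, hj, by simp [hj]⟩, hp⟩
  rw [himage, Set.ncard_coe_finset, card_image_of_injOn]
  intro i hi j hj hij
  simp only [mem_coe, mem_filter, mem_range] at hi hj
  simp only [List.getD_eq_getElem _ _ hi.1, List.getD_eq_getElem _ _ hj.1] at hij
  exact hX.getElem_inj_iff.1 hij

/-- `a j` stands for `y → x_j` and `b j` for `x_j → y`, for a vertex `y` off a path
`x₀ … x_{m-1}`. -/
structure Alternates (m : ℕ) (a b : ℕ → Prop) : Prop where
  head : a 0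
  last : b (m - 1)
  step : ∀ j, j + 1 < m → (b j ↔ ¬ a (j + 1))

open Finset in
theorem alternates_of_card {m : ℕ} {a b : ℕ → Prop} [DecidablePred a] [DecidablePred b]
    (hm : 0 < m) (hab : ∀ j, j + 1 < m → b j → ¬ a (j + 1))
    (hcard : #{j ∈ range m | a j} + #{j ∈ range m | b j} = m + 1) : Alternates m a b := by
  obtain ⟨k, rfl⟩ : ∃ k, m = k + 1 := ⟨m - 1, by omega⟩
  set g : ℕ → ℕ := fun j => (if b j then 1 else 0) + if a (j + 1) then 1 else 0
  have hg : ∀ j ∈ range k, g j ≤ 1 := by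
    intro j hj
    have := hab j (by simp at hj; omega)
    by_cases hb : b j <;> by_cases ha : a (j + 1) <;> simp_all [g]
  -- the `m + 1` arcs fill the `m + 1` slots `a 0`, `(b j, a (j + 1))` and `b k`
  have key : (if a 0 then 1 else 0) + ∑ j ∈ range k, g j + (if b k then 1 else 0) = k + 2 := by
    rw [← hcard, card_filter, card_filter, sum_range_succ', sum_range_succ, sum_add_distrib]
    ring
  have hle : ∑ j ∈ range k, g j ≤ k := by simpa using sum_le_sum hg
  have ha0 : (if a 0 then 1 else 0) ≤ 1 := by split_ifs <;> simp
  have hbk : (if b k then 1 else 0) ≤ 1 := by split_ifs <;> simp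
  refine ⟨?_, ?_, fun j hj => ?_⟩
  · by_contra h
    rw [if_neg h] at key
    omega
  · by_contra h
    rw [Nat.add_sub_cancel] at h
    rw [if_neg h] at key
    omega
  · have hsum : ∑ j ∈ range k, g j = ∑ j ∈ range k, 1 := by simp; omega
    have := (sum_eq_sum_iff_of_le hg).1 hsum j (by simp; omega)
    have := hab j hj
    by_cases hb : b j <;> simp_all [g]

namespace Alternates

variable {m : ℕ} {a b a₁ b₁ a₂ b₂ : ℕ → Prop}

theorem iff_of_cross (h₁ : Alternates m a₁ b₁) (h₂ : Alternates m a₂ b₂)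
    (h₁₂ : ∀ j, j + 1 < m → b₁ j → ¬ a₂ (j + 1)) (h₂₁ : ∀ j, j + 1 < m → b₂ j → ¬ a₁ (j + 1)) :
    ∀ j < m, (a₁ j ↔ a₂ j) ∧ (b₁ j ↔ b₂ j) := by
  have ha : ∀ j < m, a₁ j ↔ a₂ j := by
    rintro (_ | j) hj
    · exact iff_of_true h₁.head h₂.head
    · have := h₁.step j hj; have := h₂.step j hj; have := h₁₂ j hj; have := h₂₁ j hj
      tauto
  refine fun j hj => ⟨ha j hj, ?_⟩
  rcases Nat.lt_or_ge (j + 1) m with hj' | hj'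
  · rw [h₁.step j hj', h₂.step j hj', ha _ hj']
  · obtain rfl : j = m - 1 := by omega
    exact iff_of_true h₁.last h₂.last

theorem exists_threshold (h : Alternates m a b) (hskip : ∀ j, j + 2 < m → b j → ¬ a (j + 2))
    (ha : ∃ j < m, ¬ a j) (hb : ∃ j < m, ¬ b j) :
    ∃ l, 2 ≤ l ∧ l ≤ m - 1 ∧ (∀ j < m, l - 1 ≤ j → b j) ∧ ∀ j ≤ l - 1, a j := by
  classical
  set l := Nat.find ha
  obtain ⟨hlm, hl⟩ : l < m ∧ ¬ a l := Nat.find_spec ha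
  have hlt : ∀ j < l, a j := fun j hj => by
    by_contra hj'
    exact Nat.find_min ha hj ⟨by omega, hj'⟩
  have hl0 : l ≠ 0 := fun h0 => hl (h0 ▸ h.head)
  have hnot : ∀ j, l ≤ j → j < m → ¬ a j := by
    intro j hj
    induction j, hj using Nat.le_induction with
    | base => exact fun _ => hl
    | succ j hlj ih =>
      intro hjm
      have hb' : b (j - 1) := (h.step (j - 1) (by omega)).2 (by
        rw [Nat.sub_add_cancel (by omega)]; exact ih (by omega))
      simpa [show j - 1 + 2 = j + 1 by omega] using hskip (j - 1) (by omega) hb'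
  have hbj : ∀ j < m, l - 1 ≤ j → b j := by
    intro j hjm hj
    rcases Nat.lt_or_ge (j + 1) m with hj' | hj'
    · exact (h.step j hj').2 (hnot (j + 1) (by omega) hj')
    · exact (show j = m - 1 by omega) ▸ h.last
  have hl2 : 2 ≤ l := by
    by_contra hl2
    obtain ⟨j, hj, hbj'⟩ := hb
    exact hbj' (hbj j hj (by omega))
  exact ⟨l, hl2, by omega, hbj, fun j hj => hlt j (by omega)⟩

end Alternates

section LongestCycle

variable {V : Type*} {A : V → V → Prop} {z : V} {X : List V}

theorem isCycle_get_of_isChain (hch : (z :: X ++ [z]).IsChain A) (hnd : (z :: X).Nodup)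
    (hX : X ≠ []) : IsCycle A (z :: X).get := by
  refine ⟨by simpa [Nat.one_le_iff_ne_zero] using hX, List.nodup_iff_injective_get.mp hnd,
    fun i => ?_⟩
  have := List.isChain_iff_getElem.mp hch i (by simpa using i.2)
  rw [List.getElem_append_left i.2] at this
  rcases Nat.lt_or_ge (i + 1) (X.length + 1) with hi | hi
  · rw [List.getElem_append_left hi] at this
    simpa [Nat.mod_eq_of_lt hi] using this
  · have hi' : i.val = X.length := by have := i.2; simp at this; omega
    simpa [hi'] using this

/-- `z :: X` lists the vertices of a longest cycle through `z`, starting at `z`. -/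
structure IsLongestCycleThrough (A : V → V → Prop) (z : V) (X : List V) : Prop where
  isChain : (z :: X ++ [z]).IsChain A
  nodup : (z :: X).Nodup
  longest : ∀ (r : ℕ) (c : Fin r → V), IsCycle A c → z ∈ Set.range c → r ≤ X.length + 1

namespace IsLongestCycleThrough

theorem length_lt_of_insert (hC : IsLongestCycleThrough A z X) {q : V} {l : List V}
    (hQ : (q :: l).IsChain A) (hQnd : (q :: l).Nodup) (hQX : ∀ v ∈ q :: l, v ∉ z :: X)
    {s t : ℕ} (hst : s ≤ t) (ht : t ≤ X.length) (hin : A ((z :: X).getD s z) q)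
    (hout : A ((q :: l).getLast (List.cons_ne_nil _ _)) (X.getD t z)) :
    l.length < t - s := by
  rw [List.getD_eq_getElem _ _ (by simp; omega)] at hin
  rw [← List.getElem_append_singleton_eq_getD (by simp; omega)] at hout
  -- `z :: X'` is the cycle `C` with its stretch strictly between positions `s` and `t + 1`
  -- replaced by `q :: l`
  set X' := X.take s ++ (q :: l) ++ X.drop t with hX'
  have hsplit : z :: X' ++ [z] = (z :: X).take (s + 1) ++ q :: l ++ (X ++ [z]).drop t := by
    simp [hX', List.drop_append_of_le_length ht]
  have hch : (z :: X' ++ [z]).IsChain A := by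
    rw [hsplit]
    refine .append (.append ?_ hQ ?_) (hC.isChain.tail.drop t) ?_
    · exact hC.isChain.prefix ((List.take_prefix _ _).trans (List.prefix_append _ _))
    · intro a ha b hb
      rw [List.getLast?_take, if_neg s.succ_ne_zero, Nat.add_sub_cancel,
        List.getElem?_eq_getElem (by simp; omega), Option.some_or, Option.mem_some_iff] at ha
      rw [List.head?_cons, Option.mem_some_iff] at hb
      exact ha ▸ hb ▸ hin
    · intro a ha b hb
      rw [List.getLast?_append_of_ne_nil _ (List.cons_ne_nil _ _),
        List.getLast?_eq_some_getLast (List.cons_ne_nil _ _), Option.mem_some_iff] at ha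
      rw [List.head?_drop, List.getElem?_eq_getElem (by simp; omega), Option.mem_some_iff] at hb
      exact ha ▸ hb ▸ hout
  have hnd : (z :: X').Nodup := by
    have hsub : (z :: (X.take s ++ X.drop t)).Sublist (z :: X) := by
      refine .cons_cons z ?_
      simpa using (List.take_sublist_take_left hst (l := X)).append (.refl (X.drop t))
    have hperm : (z :: X').Perm ((q :: l) ++ z :: (X.take s ++ X.drop t)) := by
      simpa [hX'] using List.perm_append_comm_assoc (z :: X.take s) (q :: l) (X.drop t)
    refine (List.nodup_append.mpr ⟨hQnd, hC.nodup.sublist hsub, ?_⟩).perm hperm.symm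
    rintro a ha b hb rfl
    exact hQX a ha (hsub.subset hb)
  have hlen : X'.length = s + (l.length + 1) + (X.length - t) := by
    simp [hX']; omega
  have := hC.longest _ _ (isCycle_get_of_isChain hch hnd (by simp [hX'])) ⟨⟨0, by simp⟩, rfl⟩
  simp only [List.length_cons] at this
  omega

theorem lt_of_reachIn (hC : IsLongestCycleThrough A z X) {q q' : V} (hq : q ∉ z :: X)
    (hqq' : ReachIn A {v | v ∉ z :: X} q q') {s t : ℕ} (hst : s ≤ t) (ht : t ≤ X.length)
    (hin : A ((z :: X).getD s z) q) (hout : A q' (X.getD t z)) :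
    s < t ∧ (q ≠ q' → s + 1 < t) := by
  obtain ⟨l, hch, hnd, hl, hlast⟩ := hqq'.exists_nodup_isChain
  have hlen := hC.length_lt_of_insert hch hnd (List.forall_mem_cons.2 ⟨hq, hl⟩) hst ht hin
    (hlast ▸ hout)
  refine ⟨by omega, fun hne => ?_⟩
  have : l ≠ [] := by rintro rfl; exact hne hlast
  have := List.length_pos_of_ne_nil this
  omega

theorem not_arc_of_arc (hC : IsLongestCycleThrough A z X) {y y' : V} (hy : y ∉ z :: X)
    (hyy' : ReachIn A {v | v ∉ z :: X} y y') {j : ℕ} (hj : j + 1 < X.length)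
    (h : A (X.getD j z) y) : ¬ A y' (X.getD (j + 1) z) := fun h' =>
  (hC.lt_of_reachIn hy hyy' le_rfl hj.le (by simpa using h) h').1.false

theorem exists_not_arc_to [Fintype V] (hC : IsLongestCycleThrough A z X) (h2 : IsKStrong A 2)
    (hX : X ≠ []) {y : V} (hy : y ∉ z :: X) : ∃ j < X.length, ¬ A y (X.getD j z) := by
  by_contra! hall
  have hlast : X.getLast hX ∈ X := List.getLast_mem hX
  have hz : z ≠ X.getLast hX := fun h => (List.nodup_cons.mp hC.nodup).1 (h ▸ hlast)
  have hy' : y ≠ X.getLast hX := fun h => hy (h ▸ List.mem_cons_of_mem _ hlast)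
  obtain ⟨w, q, hw, hwC, hwq, hq, hqy⟩ := (h2.2 {X.getLast hX} (by simp) z hz y hy').exists_entry
    (T := {v | v ∉ z :: X}) (by simp) hy
  obtain ⟨s, hs, rfl⟩ := List.mem_iff_getElem.mp (not_not.mp hwC)
  have hsX : s < X.length := by
    refine lt_of_le_of_ne (by simpa using hs) fun h => hw ?_
    subst h
    simp [List.getElem_cons, hX, List.getLast_eq_getElem]
  rw [← List.getD_eq_getElem _ z hs] at hwq
  exact (hC.lt_of_reachIn hq hqy le_rfl hsX.le hwq (hall s hsX)).1.false

theorem exists_not_arc_from [Fintype V] (hC : IsLongestCycleThrough A z X) (h2 : IsKStrong A 2)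
    (hX : X ≠ []) {y : V} (hy : y ∉ z :: X) : ∃ j < X.length, ¬ A (X.getD j z) y := by
  by_contra! hall
  have hhead : X.head hX ∈ X := List.head_mem hX
  have hz : z ≠ X.head hX := fun h => (List.nodup_cons.mp hC.nodup).1 (h ▸ hhead)
  have hy' : y ≠ X.head hX := fun h => hy (h ▸ List.mem_cons_of_mem _ hhead)
  obtain ⟨q, w, hyq, hq, hqw, hw, hwC⟩ := (h2.2 {X.head hX} (by simp) y hy' z hz).exists_exit
    (T := {v | v ∉ z :: X}) hy (by simp)
  obtain ⟨t, ht, rfl⟩ := List.mem_iff_getElem.mp (show w ∈ X ++ [z] by simp at hwC ⊢; tauto)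
  obtain ⟨k, rfl⟩ : ∃ k, t = k + 1 := Nat.exists_eq_succ_of_ne_zero fun h => hw (by
    subst h; simp [List.getElem_append_left (List.length_pos_of_ne_nil hX), List.head_eq_getElem])
  rw [List.getElem_append_singleton_eq_getD] at hqw
  have hk : k < X.length := by simpa using ht
  exact (hC.lt_of_reachIn hy hyq le_rfl hk (by simpa using hall k hk) hqw).1.false

theorem exists_threshold [Fintype V] (hC : IsLongestCycleThrough A z X) (h2 : IsKStrong A 2)
    (hX : 2 ≤ X.length) {y₁ y₂ : V} (hy₁ : y₁ ∉ z :: X) (hy₂ : y₂ ∉ z :: X) (hne : y₁ ≠ y₂)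
    (h₁₂ : ReachIn A {v | v ∉ z :: X} y₁ y₂) (h₂₁ : ReachIn A {v | v ∉ z :: X} y₂ y₁)
    (hdeg₁ : degreeIn A y₁ {v | v ∈ X} = X.length + 1)
    (hdeg₂ : degreeIn A y₂ {v | v ∈ X} = X.length + 1) :
    ∃ l, 2 ≤ l ∧ l ≤ X.length - 1 ∧
      (∀ j < X.length, l - 1 ≤ j → A (X.getD j z) y₁ ∧ A (X.getD j z) y₂) ∧
      ∀ j ≤ l - 1, A y₁ (X.getD j z) ∧ A y₂ (X.getD j z) := by
  classical
  have hXne : X ≠ [] := List.ne_nil_of_length_pos (by omega)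
  have hnd : X.Nodup := (List.nodup_cons.mp hC.nodup).2
  have alt {y} (hy : y ∉ z :: X) (hdeg : degreeIn A y {v | v ∈ X} = X.length + 1) :
      Alternates X.length (fun j => A y (X.getD j z)) (fun j => A (X.getD j z) y) := by
    refine alternates_of_card (by omega) (fun j hj => hC.not_arc_of_arc hy .refl hj) ?_
    rwa [degreeIn, ncard_sep_mem_eq_card hnd _ z, ncard_sep_mem_eq_card hnd _ z] at hdeg
  have heq := (alt hy₁ hdeg₁).iff_of_cross (alt hy₂ hdeg₂)
    (fun j hj => hC.not_arc_of_arc hy₁ h₁₂ hj) (fun j hj => hC.not_arc_of_arc hy₂ h₂₁ hj)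
  obtain ⟨l, hl2, hlX, hb, ha⟩ := (alt hy₁ hdeg₁).exists_threshold
    -- `x_j → y₁ ⇝ y₂ → x_{j+2}` would replace `x_{j+1}` by at least two vertices
    (fun j hj h h' => (hC.lt_of_reachIn hy₁ h₁₂ (s := j + 1) (by omega) (by omega)
      (by simpa using h) ((heq _ (by omega)).1.1 h')).2 hne |>.false)
    (hC.exists_not_arc_to h2 hXne hy₁)
    (by
      obtain ⟨j, hj, h⟩ := hC.exists_not_arc_from h2 hXne hy₂
      exact ⟨j, hj, fun h' => h ((heq j hj).2.1 h')⟩)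
  exact ⟨l, hl2, hlX, fun j hj hlj => ⟨hb j hj hlj, (heq j hj).2.1 (hb j hj hlj)⟩,
    fun j hj => ⟨ha j hj, (heq j (by omega)).1.1 (ha j hj)⟩⟩

end IsLongestCycleThrough

theorem isLongestCycleThrough_ofFn {m : ℕ} {x : Fin m → V} (hm : 0 < m)
    (hxinj : Function.Injective x) (hzx : z ∉ Set.range x)
    (harc : ∀ (i : Fin m) (h : i.val + 1 < m), A (x i) (x ⟨i.val + 1, h⟩))
    (harcz1 : A (x ⟨m - 1, by omega⟩) z) (harcz2 : A z (x ⟨0, hm⟩))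
    (hlongest : ∀ (r : ℕ) (c : Fin r → V), IsCycle A c → z ∈ Set.range c → r ≤ m + 1) :
    IsLongestCycleThrough A z (List.ofFn x) := by
  refine ⟨.append (.cons (List.isChain_ofFn.2 fun i hi => harc ⟨i, by omega⟩ hi) ?_)
    (.singleton z) ?_, List.nodup_cons.2 ⟨by simpa using hzx, List.nodup_ofFn.2 hxinj⟩,
    by simpa using hlongest⟩
  · simpa [List.head?_eq_getElem?, hm] using harcz2
  · rw [List.getLast?_cons, List.getLast?_eq_getElem?]
    simpa [hm] using harcz1

end LongestCycle

/-- The path `x₁ … x_m` is indexed by `Fin m`, so the paper's `x_t` is `x ⟨t - 1, _⟩`: the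
condition `l ≤ t` reads `l - 1 ≤ i.val` and `t ≤ l` reads `i.val ≤ l - 1`. -/
theorem statement12 {V : Type*} [Fintype V] (A : V → V → Prop)
    (h2strong : IsKStrong A 2)
    (z : V)
    (m : ℕ) (hm2 : 2 ≤ m)
    -- the cycle C = x₁ x₂ … x_m z x₁ of length m + 1 through z
    (x : Fin m → V) (hxinj : Function.Injective x) (hzx : z ∉ Set.range x)
    (harc : ∀ (i : Fin m) (h : i.val + 1 < m), A (x i) (x ⟨i.val + 1, h⟩))
    (harcz1 : A (x ⟨m - 1, by omega⟩) z)
    (harcz2 : A z (x ⟨0, by omega⟩))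
    -- C is a longest cycle through z
    (hlongest : ∀ (r : ℕ) (c : Fin r → V), IsCycle A c → z ∈ Set.range c → r ≤ m + 1)
    (Y : Set V) (hY : Y = (Set.range x ∪ {z})ᶜ)
    (y₁ y₂ : V) (hy₁ : y₁ ∈ Y) (hy₂ : y₂ ∈ Y) (hyne : y₁ ≠ y₂)
    -- y₁ and y₂ are mutually reachable in D⟨Y⟩
    (hreach₁ : ReachIn A Y y₁ y₂) (hreach₂ : ReachIn A Y y₂ y₁)
    (hdy₁ : degreeIn A y₁ (Set.range x) = m + 1)
    (hdy₂ : degreeIn A y₂ (Set.range x) = m + 1)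
    : ∃ l : ℕ, 2 ≤ l ∧ l ≤ m - 1 ∧
        (∀ i : Fin m, l - 1 ≤ i.val → A (x i) y₁ ∧ A (x i) y₂) ∧
        (∀ i : Fin m, i.val ≤ l - 1 → A y₁ (x i) ∧ A y₂ (x i)) := by
  have hC := isLongestCycleThrough_ofFn (by omega) hxinj hzx harc harcz1 harcz2 hlongest
  have hY' : Y = {v | v ∉ z :: List.ofFn x} := by
    ext v
    simp [hY]
  have hrange : Set.range x = {v | v ∈ List.ofFn x} := by
    ext v
    simp
  rw [hY'] at hy₁ hy₂ hreach₁ hreach₂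
  rw [hrange] at hdy₁ hdy₂
  obtain ⟨l, hl2, hlm, hout, hin⟩ := hC.exists_threshold h2strong (by simpa) hy₁ hy₂ hyne
    hreach₁ hreach₂ (by simpa using hdy₁) (by simpa using hdy₂)
  refine ⟨l, hl2, by simpa using hlm, fun i hi => ?_, fun i hi => ?_⟩
  · simpa using hout i (by simp) hi
  · simpa using hin i hi
end

section
/- Let D be a non-Hamiltonian 2-strong digraph of order n such that n−1 of its vertices have degree at least n+1 and the remaining vertex z has degree at most n−2. Suppose C = x_1 x_2 … x_m z x_1, with 2 ≤ m ≤ n−3, is a longest directed cycle through z in D, the set Y = V(D) \ V(C) contains two distinct vertices y_1, y_2 that are mutually reachable in D⟨Y⟩ with d(y_i, {x_1, …, x_m}) = m+1 for each i ∈ {1,2}, and l is an integer with 2 ≤ l ≤ m−1 such that every vertex of {x_l, …, x_m} dominates both y_1 and y_2 and both y_1 and y_2 dominate every vertex of {x_1, …, x_l}. Set E = {x_1, …, x_{l−1}} and F = {x_{l+1}, …, x_m}. If some vertex of E dominates z, then z dominates no vertex of F. -/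
/-!
Index the path `C - z` as `x₀ … x_{m-1}`. If `xᵢ → z` with `i ≤ l - 2` and `z → xⱼ` with `j ≥ l`,
then `x_{m-1}` and `x_{j-1}` dominate `y₁, y₂`, which in turn dominate `x₀` and `x_{i+1}`, so
`z xⱼ … x_{m-1} y₂ x_{i+1} … x_{j-1} y₁ x₀ … xᵢ z` is a cycle through `z` of length `m + 3`,
contradicting the maximality of `C`.
-/

theorem List.isChain_cons_map_range'_append {α : Type*} {R : α → α → Prop} {p : ℕ → α}
    {u w : α} {l : List α} {s n : ℕ}
    (hu : R u (p s)) (hp : ∀ t, s ≤ t → t < s + n → R (p t) (p (t + 1)))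
    (hw : R (p (s + n)) w) (hl : IsChain R (w :: l)) :
    IsChain R (u :: ((range' s (n + 1)).map p ++ w :: l)) := by
  induction n generalizing s u with
  | zero => exact .cons_cons hu (.cons_cons hw hl)
  | succ n ih =>
    rw [range'_succ, map_cons, cons_append, isChain_cons_cons]
    exact ⟨hu, ih (hp s le_rfl (by omega)) (fun t h₁ h₂ => hp t (by omega) (by omega))
      (by rwa [show s + 1 + n = s + (n + 1) by omega])⟩

theorem List.cons_append_cons_append_cons_perm {α : Type*} {a b c : α} {l₁ l₂ l₃ : List α} :
    (a :: (l₃ ++ b :: (l₂ ++ c :: l₁))).Perm (a :: b :: c :: (l₁ ++ l₂ ++ l₃)) := by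
  rw [← Multiset.coe_eq_coe]
  simp only [← Multiset.cons_coe, ← Multiset.coe_add, ← Multiset.singleton_add]
  abel

section

variable {V : Type*} {A : V → V → Prop}

theorem isCycle_of_isChain_append_singleton {v : V} {L : List V} {r : ℕ}
    (hr : 2 ≤ r) (hlen : (v :: L).length = r) (hnd : (v :: L).Nodup)
    (hc : List.IsChain A (v :: L ++ [v])) :
    IsCycle A (fun i : Fin r => (v :: L)[i.val]'(hlen ▸ i.isLt)) := by
  subst hlen
  refine ⟨hr, fun i j h => Fin.ext ?_, fun i => ?_⟩
  · exact Fin.val_eq_of_eq (List.nodup_iff_injective_get.mp hnd h)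
  · have hi := List.isChain_iff_getElem.mp hc i (by simp; omega)
    rcases Nat.lt_or_ge (i.val + 1) (v :: L).length with h | h
    · simp only [Nat.mod_eq_of_lt h]
      rwa [List.getElem_append_left, List.getElem_append_left] at hi
    · simp only [show i.val + 1 = (v :: L).length by omega, Nat.mod_self]
      rw [List.getElem_append_left, List.getElem_append_right (by omega)] at hi
      simpa using hi

theorem IsPath.exists_isCycle_length_add_three {m : ℕ} {x : Fin m → V} (hx : IsPath A x)
    {z y₁ y₂ : V} (hz : z ∉ Set.range x) (hy₁ : y₁ ∉ Set.range x) (hy₂ : y₂ ∉ Set.range x)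
    (hzy₁ : z ≠ y₁) (hzy₂ : z ≠ y₂) (hy : y₁ ≠ y₂)
    {i j : ℕ} (hij : i + 1 < j) (hjm : j < m)
    (hxz : A (x ⟨i, by omega⟩) z) (hzx : A z (x ⟨j, hjm⟩))
    (hxy₂ : A (x ⟨m - 1, by omega⟩) y₂) (hy₂x : A y₂ (x ⟨i + 1, by omega⟩))
    (hxy₁ : A (x ⟨j - 1, by omega⟩) y₁) (hy₁x : A y₁ (x ⟨0, by omega⟩)) :
    ∃ c : Fin (m + 3) → V, IsCycle A c ∧ z ∈ Set.range c := by
  set p : ℕ → V := fun t => if h : t < m then x ⟨t, h⟩ else z with hp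
  have hpx : ∀ t (ht : t < m), p t = x ⟨t, ht⟩ := fun t ht => dif_pos ht
  have hparc : ∀ t, t + 1 < m → A (p t) (p (t + 1)) := fun t ht => by
    rw [hpx t (by omega), hpx (t + 1) ht]
    exact hx.2 ⟨t, by omega⟩ ht
  set S₁ := (List.range' 0 (i + 1)).map p
  set S₂ := (List.range' (i + 1) (j - i - 2 + 1)).map p
  set S₃ := (List.range' j (m - 1 - j + 1)).map p
  have hsplit : S₁ ++ S₂ ++ S₃ = List.ofFn x := by
    have h₁₂ := List.range'_append_1 (s := 0) (m := i + 1) (n := j - i - 2 + 1)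
    have h₁₂₃ := List.range'_append_1 (s := 0) (m := j) (n := m - 1 - j + 1)
    rw [zero_add, show i + 1 + (j - i - 2 + 1) = j by omega] at h₁₂
    rw [zero_add, show j + (m - 1 - j + 1) = m by omega] at h₁₂₃
    rw [← List.map_append, ← List.map_append, h₁₂, h₁₂₃]
    apply List.ext_getElem <;> simp +contextual [hp]
  have hnd : (z :: (S₃ ++ y₂ :: (S₂ ++ y₁ :: S₁))).Nodup := by
    rw [List.cons_append_cons_append_cons_perm.nodup_iff, hsplit]
    simp only [List.nodup_cons, List.mem_cons, hzy₂, hzy₁, List.mem_ofFn, false_or, not_exists,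
      not_or, List.nodup_ofFn.2 hx.1, and_true]
    exact ⟨fun k hk => hz ⟨k, hk⟩, ⟨hy.symm, fun k hk => hy₂ ⟨k, hk⟩⟩, fun k hk => hy₁ ⟨k, hk⟩⟩
  have hlen : (z :: (S₃ ++ y₂ :: (S₂ ++ y₁ :: S₁))).length = m + 3 := by
    rw [List.cons_append_cons_append_cons_perm.length_eq, hsplit]
    simp
  have hchain : List.IsChain A (z :: (S₃ ++ y₂ :: (S₂ ++ y₁ :: S₁)) ++ [z]) := by
    simp only [List.cons_append, List.append_assoc]
    refine List.isChain_cons_map_range'_append ?_ (fun t _ _ => hparc t (by omega)) ?_ <|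
      List.isChain_cons_map_range'_append ?_ (fun t _ _ => hparc t (by omega)) ?_ <|
      List.isChain_cons_map_range'_append ?_ (fun t _ _ => hparc t (by omega)) ?_ <|
      List.isChain_singleton z
    · rwa [hpx j hjm]
    · rwa [show j + (m - 1 - j) = m - 1 by omega, hpx _ (by omega)]
    · rwa [hpx _ (by omega)]
    · rwa [show i + 1 + (j - i - 2) = j - 1 by omega, hpx _ (by omega)]
    · rwa [hpx _ (by omega)]
    · rwa [zero_add, hpx _ (by omega)]
  exact ⟨_, isCycle_of_isChain_append_singleton (by omega) hlen hnd hchain, ⟨0, rfl⟩⟩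

end

/-- Claim 1(i): in the situation of Lemma 4 with `l` as in (1), set
`E = {x₁, …, x_{l-1}}` (indices `≤ l - 2` in `Fin m`) and `F = {x_{l+1}, …, x_m}`
(indices `≥ l` in `Fin m`).  If some vertex of `E` dominates `z`, then `z` dominates
no vertex of `F`. -/
theorem statement13 {V : Type*} (A : V → V → Prop)
    (z : V)
    (m : ℕ)
    -- the cycle C = x₁ x₂ … x_m z x₁ of length m + 1 through z
    (x : Fin m → V) (hxinj : Function.Injective x) (hzx : z ∉ Set.range x)
    (harc : ∀ (i : Fin m) (h : i.val + 1 < m), A (x i) (x ⟨i.val + 1, h⟩))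
    -- C is a longest cycle through z
    (hlongest : ∀ (r : ℕ) (c : Fin r → V), IsCycle A c → z ∈ Set.range c → r ≤ m + 1)
    (Y : Set V) (hY : Y = (Set.range x ∪ {z})ᶜ)
    (y₁ y₂ : V) (hy₁ : y₁ ∈ Y) (hy₂ : y₂ ∈ Y) (hyne : y₁ ≠ y₂)
    (l : ℕ) (hl2 : 2 ≤ l)
    (hdom₁ : ∀ i : Fin m, l - 1 ≤ i.val → A (x i) y₁ ∧ A (x i) y₂)
    (hdom₂ : ∀ i : Fin m, i.val ≤ l - 1 → A y₁ (x i) ∧ A y₂ (x i))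
    (hEz : ∃ i : Fin m, i.val ≤ l - 2 ∧ A (x i) z) :
    ∀ j : Fin m, l ≤ j.val → ¬ A z (x j) := by
  rintro j hj hzj
  obtain ⟨i, hi, hiz⟩ := hEz
  subst hY
  simp only [Set.mem_compl_iff, Set.mem_union, Set.mem_singleton_iff, not_or] at hy₁ hy₂
  obtain ⟨c, hc, hzc⟩ := IsPath.exists_isCycle_length_add_three ⟨hxinj, harc⟩ hzx hy₁.1 hy₂.1
    (Ne.symm hy₁.2) (Ne.symm hy₂.2) hyne (i := i) (j := j) (by omega) j.isLt hiz hzj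
    (hdom₁ _ (by simp only; omega)).2 (hdom₂ _ (by simp only; omega)).2
    (hdom₁ _ (by simp only; omega)).1 (hdom₂ _ (by simp only; omega)).1
  have := hlongest _ c hc hzc
  omega
end

section
/- Let k ≥ 1 be an integer and let D be a non-Hamiltonian 2-strong digraph of order n such that n−1 of its vertices have degree at least n+k and the remaining vertex z has degree at least n−k−4. Suppose a longest directed cycle C through z in D has length m ≥ n−k−2, and let Y = V(D) \ V(C). Then m = n−k−2, |Y| = k+2, the induced subdigraph D⟨Y⟩ is a complete digraph (i.e., for every two distinct vertices u, v ∈ Y both arcs uv and vu are present), and every vertex u ∈ Y satisfies d(u, V(C)) = n−k−2. -/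
section Aux
variable {V : Type*} [Fintype V] [DecidableEq V]

lemma split_ncard (p : V → Prop) (S : Set V) :
    {y | p y}.ncard = {y ∈ S | p y}.ncard + {y ∈ Sᶜ | p y}.ncard := by
  rw [← Set.ncard_union_eq (by
    rw [Set.disjoint_left]
    rintro y ⟨hy, -⟩ ⟨hy', -⟩
    exact hy' hy) (Set.toFinite _) (Set.toFinite _)]
  congr 1
  ext y
  by_cases h : y ∈ S <;> simp [h]

lemma degree_split (A : V → V → Prop) (u : V) (S : Set V) :
    degree A u = degreeIn A u S + degreeIn A u Sᶜ := by
  unfold degree degreeIn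
  rw [split_ncard (fun y => A u y) S, split_ncard (fun y => A y u) S]
  ring

lemma no_insertion {A : V → V → Prop} {m : ℕ} {c : Fin m → V} (hc : IsCycle A c)
    {z : V} (hz : z ∈ Set.range c)
    (hlongest : ∀ (r : ℕ) (c' : Fin r → V), IsCycle A c' → z ∈ Set.range c' → r ≤ m)
    {u : V} (hu : u ∉ Set.range c) (i₀ : Fin m)
    (h1 : A (c i₀) u) (h2 : A u (c ⟨(i₀.val + 1) % m, Nat.mod_lt _ i₀.pos⟩)) : False := by
  have hm2 := hc.1
  have hinj := hc.2.1
  have harc := hc.2.2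
  have hm0 : 0 < m := by omega
  set σ : Fin m → Fin m := fun j => ⟨(i₀.val + 1 + j.val) % m, Nat.mod_lt _ hm0⟩ with hσ
  have hσinj : Function.Injective σ := by
    intro a b hab
    have h' : (i₀.val + 1 + a.val) % m = (i₀.val + 1 + b.val) % m := congrArg Fin.val hab
    have h'' := Nat.ModEq.add_left_cancel' (i₀.val + 1) h'
    exact Fin.ext (by
      simpa [Nat.ModEq, Nat.mod_eq_of_lt a.isLt, Nat.mod_eq_of_lt b.isLt] using h'')
  have hσsurj : Function.Surjective σ := Finite.injective_iff_surjective.mp hσinj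
  set d : Fin (m+1) → V := fun j => if h : j.val < m then c (σ ⟨j.val, h⟩) else u with hd
  have hdlt : ∀ (j : Fin (m+1)) (h : j.val < m), d j = c (σ ⟨j.val, h⟩) := fun j h => dif_pos h
  have hdm : ∀ (j : Fin (m+1)), j.val = m → d j = u := by
    intro j h
    simp [hd, h]
  have hcyc : IsCycle A d := by
    refine ⟨by omega, ?_, ?_⟩
    · intro a b hab
      by_cases ha : a.val < m <;> by_cases hb : b.val < m
      · rw [hdlt a ha, hdlt b hb] at hab
        have h3 := hσinj (hinj hab)
        rw [Fin.mk.injEq] at h3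
        exact Fin.ext h3
      · rw [hdlt a ha, hdm b (by omega)] at hab
        exact absurd ⟨_, hab⟩ hu
      · rw [hdm a (by omega), hdlt b hb] at hab
        exact absurd ⟨_, hab.symm⟩ hu
      · exact Fin.ext (by omega)
    · intro j
      rcases Nat.lt_trichotomy (j.val + 1) m with hj | hj | hj
      · -- j.val + 1 < m
        have hjm : j.val < m := by omega
        have e0 : (⟨(j.val + 1) % (m + 1), Nat.mod_lt _ j.pos⟩ : Fin (m+1))
            = ⟨j.val + 1, by omega⟩ := Fin.ext (Nat.mod_eq_of_lt (by omega))
        rw [e0, hdlt j hjm, hdlt ⟨j.val + 1, by omega⟩ hj]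
        have key : (σ ⟨j.val + 1, hj⟩ : Fin m)
            = ⟨((σ ⟨j.val, hjm⟩).val + 1) % m, Nat.mod_lt _ hm0⟩ := by
          apply Fin.ext
          show (i₀.val + 1 + (j.val + 1)) % m = ((i₀.val + 1 + j.val) % m + 1) % m
          rw [Nat.mod_add_mod]
          congr 1
        rw [key]
        exact harc _
      · -- j.val + 1 = m
        have hjm : j.val < m := by omega
        have e0 : (⟨(j.val + 1) % (m + 1), Nat.mod_lt _ j.pos⟩ : Fin (m+1))
            = ⟨m, by omega⟩ := Fin.ext (by
          show (j.val + 1) % (m + 1) = m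
          rw [hj]
          exact Nat.mod_eq_of_lt (by omega))
        rw [e0, hdlt j hjm, hdm ⟨m, by omega⟩ rfl]
        have key : σ ⟨j.val, hjm⟩ = i₀ := by
          apply Fin.ext
          show (i₀.val + 1 + j.val) % m = i₀.val
          have : i₀.val + 1 + j.val = i₀.val + m := by omega
          rw [this, Nat.add_mod_right]
          exact Nat.mod_eq_of_lt i₀.isLt
        rw [key]
        exact h1
      · -- j.val = m
        have hjv : j.val = m := by omega
        have e0 : (⟨(j.val + 1) % (m + 1), Nat.mod_lt _ j.pos⟩ : Fin (m+1))
            = ⟨0, by omega⟩ := Fin.ext (by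
          show (j.val + 1) % (m + 1) = 0
          have hx : j.val + 1 = m + 1 := by omega
          rw [hx]
          exact Nat.mod_self (m+1))
        rw [e0, hdm j hjv, hdlt ⟨0, by omega⟩ hm0]
        have key : σ ⟨0, hm0⟩ = ⟨(i₀.val + 1) % m, Nat.mod_lt _ i₀.pos⟩ := by
          apply Fin.ext
          show (i₀.val + 1 + 0) % m = (i₀.val + 1) % m
          rw [Nat.add_zero]
        rw [key]
        exact h2
  have hzd : z ∈ Set.range d := by
    obtain ⟨i, hi⟩ := hz
    obtain ⟨j, hj⟩ := hσsurj i
    refine ⟨⟨j.val, by omega⟩, ?_⟩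
    rw [hdlt ⟨j.val, by omega⟩ j.isLt]
    rw [show (⟨j.val, j.isLt⟩ : Fin m) = j from Fin.ext rfl, hj]
    exact hi
  exact absurd (hlongest (m+1) d hcyc hzd) (by omega)

lemma degreeIn_cycle_le {A : V → V → Prop} {m : ℕ} {c : Fin m → V} (hc : IsCycle A c)
    {z : V} (hz : z ∈ Set.range c)
    (hlongest : ∀ (r : ℕ) (c' : Fin r → V), IsCycle A c' → z ∈ Set.range c' → r ≤ m)
    {u : V} (hu : u ∉ Set.range c) :
    degreeIn A u (Set.range c) ≤ m := by
  have hm2 := hc.1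
  have hinj := hc.2.1
  have hm0 : 0 < m := by omega
  set τ : Fin m → Fin m := fun i => ⟨(i.val + 1) % m, Nat.mod_lt _ i.pos⟩ with hτ
  have hτinj : Function.Injective τ := by
    intro a b hab
    have h' : (a.val + 1) % m = (b.val + 1) % m := congrArg Fin.val hab
    have h'' := Nat.ModEq.add_right_cancel' 1 h'
    exact Fin.ext (by
      simpa [Nat.ModEq, Nat.mod_eq_of_lt a.isLt, Nat.mod_eq_of_lt b.isLt] using h'')
  have hτsurj : Function.Surjective τ := Finite.injective_iff_surjective.mp hτinj
  set P : Set (Fin m) := {i | A (c i) u} with hP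
  set Q : Set (Fin m) := {i | A u (c (τ i))} with hQ
  have hdisj : Disjoint P Q := by
    rw [Set.disjoint_left]
    intro i hiP hiQ
    exact no_insertion hc hz hlongest hu i hiP hiQ
  have hQcard : Q.ncard = {i : Fin m | A u (c i)}.ncard := by
    have himg : τ '' Q = {i : Fin m | A u (c i)} := by
      ext i
      constructor
      · rintro ⟨j, hj, rfl⟩
        exact hj
      · intro hi
        obtain ⟨j, rfl⟩ := hτsurj i
        exact ⟨j, hi, rfl⟩
    rw [← himg, Set.ncard_image_of_injective _ hτinj]
  have hsum : P.ncard + Q.ncard ≤ m := by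
    rw [← Set.ncard_union_eq hdisj (Set.toFinite _) (Set.toFinite _)]
    calc (P ∪ Q).ncard ≤ (Set.univ : Set (Fin m)).ncard :=
          Set.ncard_le_ncard (Set.subset_univ _) (Set.toFinite _)
      _ = m := by rw [Set.ncard_univ, Nat.card_eq_fintype_card, Fintype.card_fin]
  have e1 : {y ∈ Set.range c | A u y} = c '' {i : Fin m | A u (c i)} := by
    ext y
    constructor
    · rintro ⟨⟨i, rfl⟩, hy⟩
      exact ⟨i, hy, rfl⟩
    · rintro ⟨i, hi, rfl⟩
      exact ⟨⟨i, rfl⟩, hi⟩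
  have e2 : {y ∈ Set.range c | A y u} = c '' P := by
    ext y
    constructor
    · rintro ⟨⟨i, rfl⟩, hy⟩
      exact ⟨i, hy, rfl⟩
    · rintro ⟨i, hi, rfl⟩
      exact ⟨⟨i, rfl⟩, hi⟩
  unfold degreeIn
  rw [e1, e2, Set.ncard_image_of_injective _ hinj, Set.ncard_image_of_injective _ hinj]
  omega

end Aux

/-- Let `k ≥ 1` and let `D` be a non-Hamiltonian 2-strong digraph of order `n` such
that `n - 1` of its vertices have degree at least `n + k` and the remaining vertex `z`
has degree at least `n - k - 4`.  Suppose a longest directed cycle `c` through `z`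
has length `m ≥ n - k - 2`, and let `Y = V(D) \ V(c)`.  Then `m = n - k - 2`,
`|Y| = k + 2`, the subdigraph induced by `Y` is a complete digraph, and every vertex
`u ∈ Y` satisfies `d(u, V(c)) = n - k - 2`. -/
theorem statement16 {V : Type*} [Fintype V] [DecidableEq V] (A : V → V → Prop)
    (hirr : Irreflexive A)
    (k : ℕ) (hk1 : 1 ≤ k)
    (n : ℕ) (hcard : Fintype.card V = n)
    (h2strong : IsKStrong A 2)
    (hnonham : ¬ IsHamiltonian A)
    (z : V)
    (hdeg : ∀ v : V, v ≠ z → n + k ≤ degree A v)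
    (hdegz : n - k - 4 ≤ degree A z)
    (m : ℕ) (c : Fin m → V) (hc : IsCycle A c) (hzc : z ∈ Set.range c)
    (hlongest : ∀ (r : ℕ) (c' : Fin r → V), IsCycle A c' → z ∈ Set.range c' → r ≤ m)
    (hm : n - k - 2 ≤ m)
    (Y : Set V) (hY : Y = (Set.range c)ᶜ) :
    m = n - k - 2 ∧ Y.ncard = k + 2 ∧
      (∀ u ∈ Y, ∀ v ∈ Y, u ≠ v → A u v) ∧
      (∀ u ∈ Y, degreeIn A u (Set.range c) = n - k - 2) := by
  subst hcard
  have hCcard : (Set.range c).ncard = m := by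
    rw [← Set.image_univ, Set.ncard_image_of_injective _ hc.2.1, Set.ncard_univ,
      Nat.card_eq_fintype_card, Fintype.card_fin]
  have hsplit : m + Y.ncard = Fintype.card V := by
    have h := Set.ncard_add_ncard_compl (Set.range c) (Set.toFinite _) (Set.toFinite _)
    rw [Nat.card_eq_fintype_card, hCcard] at h
    rw [hY]
    exact h
  have hYne : Y.Nonempty := by
    rcases Set.eq_empty_or_nonempty Y with h | h
    · exfalso
      rw [hY, Set.compl_empty_iff] at h
      have hsurj : Function.Surjective c := Set.range_eq_univ.mp h
      have hmn : m = Fintype.card V := by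
        have := Fintype.card_of_bijective ⟨hc.2.1, hsurj⟩
        simpa using this
      subst hmn
      exact hnonham ⟨c, hc, hsurj⟩
    · exact h
  have hYc : 1 ≤ Y.ncard := (Set.ncard_pos (Set.toFinite _)).mpr hYne
  have per : ∀ u ∈ Y,
      degreeIn A u (Set.range c) ≤ m ∧
      Fintype.card V + k ≤ degreeIn A u (Set.range c) +
        ({y ∈ Y | A u y}.ncard + {y ∈ Y | A y u}.ncard) ∧
      {y ∈ Y | A u y}.ncard ≤ Y.ncard - 1 ∧ {y ∈ Y | A y u}.ncard ≤ Y.ncard - 1 ∧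
      {y ∈ Y | A u y} ⊆ Y \ {u} := by
    intro u huY
    have huc : u ∉ Set.range c := by rw [hY] at huY; exact huY
    have huz : u ≠ z := fun h => huc (h ▸ hzc)
    have h1 : degreeIn A u (Set.range c) ≤ m := degreeIn_cycle_le hc hzc hlongest huc
    have h2 : degree A u = degreeIn A u (Set.range c) + degreeIn A u Y := by
      rw [hY]
      exact degree_split A u (Set.range c)
    have hYu : (Y \ {u}).ncard = Y.ncard - 1 := Set.ncard_diff_singleton_of_mem huY
    have hsub : {y ∈ Y | A u y} ⊆ Y \ {u} := by
      rintro y ⟨hy, hAy⟩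
      refine ⟨hy, fun hm' => ?_⟩
      rw [Set.mem_singleton_iff] at hm'
      subst hm'
      exact hirr y hAy
    have hsub' : {y ∈ Y | A y u} ⊆ Y \ {u} := by
      rintro y ⟨hy, hAy⟩
      refine ⟨hy, fun hm' => ?_⟩
      rw [Set.mem_singleton_iff] at hm'
      subst hm'
      exact hirr y hAy
    have h3 : {y ∈ Y | A u y}.ncard ≤ Y.ncard - 1 := by
      rw [← hYu]; exact Set.ncard_le_ncard hsub (Set.toFinite _)
    have h4 : {y ∈ Y | A y u}.ncard ≤ Y.ncard - 1 := by
      rw [← hYu]; exact Set.ncard_le_ncard hsub' (Set.toFinite _)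
    have h5 := hdeg u huz
    have h6 : degreeIn A u Y = {y ∈ Y | A u y}.ncard + {y ∈ Y | A y u}.ncard := rfl
    rw [h6] at h2
    exact ⟨h1, by omega, h3, h4, hsub⟩
  obtain ⟨u₀, hu₀⟩ := hYne
  obtain ⟨p1, p2, p3, p4, -⟩ := per u₀ hu₀
  have hmain1 : m = Fintype.card V - k - 2 := by omega
  have hmain2 : Y.ncard = k + 2 := by omega
  refine ⟨hmain1, hmain2, ?_, ?_⟩
  · intro u huY v hvY huv
    obtain ⟨q1, q2, q3, q4, q5⟩ := per u huY
    have houtcard : Y.ncard - 1 ≤ {y ∈ Y | A u y}.ncard := by omega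
    have heq : {y ∈ Y | A u y} = Y \ {u} :=
      Set.eq_of_subset_of_ncard_le q5
        (by rw [Set.ncard_diff_singleton_of_mem huY]; exact houtcard) (Set.toFinite _)
    have hv2 : v ∈ {y ∈ Y | A u y} := by
      rw [heq]
      exact ⟨hvY, fun h3 => huv (Set.mem_singleton_iff.mp h3).symm⟩
    exact hv2.2
  · intro u huY
    obtain ⟨q1, q2, q3, q4, -⟩ := per u huY
    omega
end
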